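/- Let f be a polynomial with deg f ≤ t, B ⊆ ℝⁿ compact with nonempty interior, μ a finite Borel measure with supp(μ)=B, and (T_α)_{|α|≤t} orthonormal polynomials in L²(B,μ) spanning ℝ[x]_t. Then the minimum f* of f on B equals the infimum of ∫_B f(y) σ(y) dμ(y) over all polynomials σ(x) = Σ_{|α|≤t} σ_α T_α(x) whose coefficients satisfy σ_α = ∫_B T_α dφ for some Borel probability measure φ on B. -/

import Mathlib

open MeasureTheory MvPolynomial

/-!
Expanding `f = ∑ cᵢ Tᵢ` in the orthonormal family, orthonormality gives `∫_B f Tᵢ dμ = cᵢ`, so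
`∫_B f σ_φ dμ = ∑ cᵢ ∫_B Tᵢ dφ = ∫_B f dφ`: the density `σ_φ` reproduces the integral of `f`
against `φ`. The problem is therefore the minimisation of `∫_B f dφ` over probability measures
on `B`, whose value is `min_B f`, attained at the Dirac mass at a minimiser.
-/

/-- The paper's signed density `σ` attached to the measure `φ`. -/
noncomputable def momentDensity {X ι : Type*} [MeasurableSpace X] [Fintype ι] (g : ι → X → ℝ)
    (s : Set X) (φ : Measure X) (y : X) : ℝ :=
  ∑ i, (∫ z in s, g i z ∂φ) * g i y

section

variable {X ι : Type*} [TopologicalSpace X] [MeasurableSpace X] [OpensMeasurableSpace X]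
  [T2Space X] [Fintype ι]

theorem setIntegral_sum_mul_of_orthonormal [DecidableEq ι] {s : Set X} (hs : IsCompact s)
    {μ : Measure X} [IsFiniteMeasure μ] {g : ι → X → ℝ} (hg : ∀ i, Continuous (g i))
    (horth : ∀ i j, ∫ x in s, g i x * g j x ∂μ = if i = j then 1 else 0) (c : ι → ℝ) (i : ι) :
    ∫ x in s, (∑ j, c j * g j x) * g i x ∂μ = c i := by
  simp_rw [Finset.sum_mul, mul_assoc]
  rw [integral_finsetSum]
  · simp [integral_const_mul, horth]
  · exact fun j _ => (((hg j).mul (hg i)).continuousOn.integrableOn_compact hs).const_mul (c j)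

theorem setIntegral_mul_momentDensity [DecidableEq ι] {s : Set X} (hs : IsCompact s)
    {μ : Measure X} [IsFiniteMeasure μ] {g : ι → X → ℝ} (hg : ∀ i, Continuous (g i))
    (horth : ∀ i j, ∫ x in s, g i x * g j x ∂μ = if i = j then 1 else 0)
    (φ : Measure X) [IsFiniteMeasure φ] (c : ι → ℝ) :
    ∫ y in s, (∑ j, c j * g j y) * momentDensity g s φ y ∂μ
      = ∫ y in s, ∑ j, c j * g j y ∂φ := by
  have hF : Continuous fun y => ∑ j, c j * g j y := by fun_prop
  have hexpand : ∫ y in s, (∑ j, c j * g j y) * momentDensity g s φ y ∂μ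
      = ∑ i, (∫ z in s, g i z ∂φ) * c i := by
    simp_rw [momentDensity, Finset.mul_sum, mul_left_comm (∑ j, c j * g _ _)]
    rw [integral_finsetSum]
    · simp_rw [integral_const_mul, setIntegral_sum_mul_of_orthonormal hs hg horth]
    · exact fun i _ => ((hF.mul (hg i)).continuousOn.integrableOn_compact hs).const_mul _
  rw [hexpand, integral_finsetSum]
  · simp_rw [integral_const_mul, mul_comm]
  · exact fun j _ => ((hg j).continuousOn.integrableOn_compact hs).const_mul (c j)

theorem isLeast_setIntegral_probabilityMeasure {s : Set X} (hs : IsCompact s) {f : X → ℝ}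
    (hf : Continuous f) {m : ℝ} (hm : IsLeast (f '' s) m) :
    IsLeast {r | ∃ φ : Measure X, IsProbabilityMeasure φ ∧ φ sᶜ = 0 ∧ r = ∫ x in s, f x ∂φ} m := by
  classical
  obtain ⟨⟨x₀, hx₀s, rfl⟩, hlow⟩ := hm
  refine ⟨⟨Measure.dirac x₀, inferInstance, ?_, ?_⟩, ?_⟩
  · simp [Measure.dirac_apply' _ hs.measurableSet.compl, hx₀s]
  · rw [restrict_dirac' hs.measurableSet, if_pos hx₀s,
      integral_dirac' _ _ hf.stronglyMeasurable]
  · rintro r ⟨φ, hφ, hφs, rfl⟩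
    have hφs' : φ.real s = 1 := by
      rw [measureReal_def, (prob_compl_eq_zero_iff hs.measurableSet).1 hφs, ENNReal.toReal_one]
    simpa [hφs'] using setIntegral_ge_of_const_le_real hs.measurableSet (measure_ne_top φ s)
      (fun x hx => hlow ⟨x, hx, rfl⟩) (hf.continuousOn.integrableOn_compact hs)

end

theorem stmt3_general {n t : ℕ} (B : Set (Fin n → ℝ)) (hBc : IsCompact B)
    (μ : Measure (Fin n → ℝ)) [IsFiniteMeasure μ]
    {ι : Type*} [Fintype ι] [DecidableEq ι] (T : ι → MvPolynomial (Fin n) ℝ)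
    (horth : ∀ i j, ∫ x in B, eval x (T i) * eval x (T j) ∂μ = if i = j then 1 else 0)
    (hspan : ∀ q : MvPolynomial (Fin n) ℝ, q.totalDegree ≤ t →
      q ∈ Submodule.span ℝ (Set.range T))
    (f : MvPolynomial (Fin n) ℝ) (hf : f.totalDegree ≤ t)
    (fstar : ℝ) (hm : IsLeast ((fun x => eval x f) '' B) fstar) :
    IsGLB {r : ℝ | ∃ φ : Measure (Fin n → ℝ), IsProbabilityMeasure φ ∧ φ Bᶜ = 0 ∧
      r = ∫ y in B, eval y f * (∑ i, (∫ z in B, eval z (T i) ∂φ) * eval y (T i)) ∂μ}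
      fstar := by
  obtain ⟨c, hc⟩ := Submodule.mem_span_range_iff_exists_fun ℝ |>.1 (hspan f hf)
  have hev : ∀ x, eval x f = ∑ i, c i * eval x (T i) := fun x => by
    simp [← hc, map_sum]
  have hT : ∀ i, Continuous fun x => eval x (T i) := fun i => (T i).continuous_eval
  refine IsLeast.isGLB ?_
  convert isLeast_setIntegral_probabilityMeasure hBc f.continuous_eval hm using 1
  · rfl
  ext r
  refine exists_congr fun φ => and_congr_right fun hφ => and_congr_right fun _ => ?_
  simp only [hev]
  exact iff_of_eq (congrArg (r = ·) (setIntegral_mul_momentDensity hBc hT horth φ c))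

/-- The minimum f* of f on B equals the infimum of ∫_B f σ dμ over all signed
polynomial densities σ = Σ_α σ_α T_α whose coefficients σ_α = ∫_B T_α dφ are
moments of some Borel probability measure φ on B. -/
theorem stmt3 {n t : ℕ} (B : Set (Fin n → ℝ)) (hBc : IsCompact B)
    (hBint : (interior B).Nonempty)
    (μ : Measure (Fin n → ℝ)) [IsFiniteMeasure μ] (hsupp : μ Bᶜ = 0)
    (hpos : ∀ U : Set (Fin n → ℝ), IsOpen U → (U ∩ B).Nonempty → 0 < μ U)
    {ι : Type*} [Fintype ι] [DecidableEq ι] (T : ι → MvPolynomial (Fin n) ℝ)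
    (hdeg : ∀ i, (T i).totalDegree ≤ t)
    (horth : ∀ i j, ∫ x in B, eval x (T i) * eval x (T j) ∂μ = if i = j then 1 else 0)
    (hspan : ∀ q : MvPolynomial (Fin n) ℝ, q.totalDegree ≤ t →
      q ∈ Submodule.span ℝ (Set.range T))
    (f : MvPolynomial (Fin n) ℝ) (hf : f.totalDegree ≤ t)
    (fstar : ℝ) (hm : IsLeast ((fun x => eval x f) '' B) fstar) :
    IsGLB {r : ℝ | ∃ φ : Measure (Fin n → ℝ), IsProbabilityMeasure φ ∧ φ Bᶜ = 0 ∧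
      r = ∫ y in B, eval y f * (∑ i, (∫ z in B, eval z (T i) ∂φ) * eval y (T i)) ∂μ}
      fstar :=
  stmt3_general B hBc μ T horth hspan f hf fstar hm
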